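/- The characteristic polynomial of the 3×3 Bloch Hamiltonian H(k) of the rhombic lattice at flux Φ = π is independent of k; in particular every eigenvalue band of H(k) at Φ = π is flat (constant in k). -/

import Mathlib

/-!
`H(k)` only couples site 0 to sites 1 and 2, so its characteristic polynomial is
`λ³ − (h₀₁h₁₀ + h₀₂h₂₀) λ`, and `(−1 + u)(−1 + v) + (1 + u)(1 + v) = 2 + 2uv = 4` for
`u = e^{ik}`, `v = e^{−ik}`.
The spectrum of a matrix is the root set of its characteristic polynomial.
-/

open Complex Real

/-- The Bloch Hamiltonian of the rhombic lattice at flux `Φ = π` and momentum `k`: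
`H(k)[0,1] = e^{iπ} + e^{ik} = −1 + e^{ik}`, `H(k)[0,2] = 1 + e^{ik}`, Hermitian
conjugates below the diagonal, zeros elsewhere. -/
noncomputable def rhombicBlochPi (k : ℝ) : Matrix (Fin 3) (Fin 3) ℂ :=
  !![0, -1 + Complex.exp ((k : ℂ) * Complex.I), 1 + Complex.exp ((k : ℂ) * Complex.I);
     -1 + Complex.exp (-(k : ℂ) * Complex.I), 0, 0;
     1 + Complex.exp (-(k : ℂ) * Complex.I), 0, 0]

open Polynomial

theorem Matrix.charpoly_fin_three_star {R : Type*} [CommRing R] (a b c d : R) :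
    (!![0, a, b; c, 0, 0; d, 0, 0] : Matrix (Fin 3) (Fin 3) R).charpoly
      = X ^ 3 - C (a * c + b * d) * X := by
  rw [Matrix.charpoly, Matrix.det_fin_three]
  simp
  ring

theorem Matrix.spectrum_eq_of_charpoly_eq {n R : Type*} [Fintype n] [DecidableEq n] [CommRing R]
    {A B : Matrix n n R} (h : A.charpoly = B.charpoly) : spectrum R A = spectrum R B := by
  ext r
  simp only [Matrix.mem_spectrum_iff_not_isUnit_eval_charpoly, h]

lemma neg_one_add_mul_add_one_add_mul_of_mul_eq_one {R : Type*} [CommRing R] {u v : R}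
    (h : u * v = 1) : (-1 + u) * (-1 + v) + (1 + u) * (1 + v) = 4 := by
  linear_combination 2 * h

lemma rhombicBlochPi_charpoly (k : ℝ) :
    (rhombicBlochPi k).charpoly = X ^ 3 - C 4 * X := by
  rw [rhombicBlochPi, Matrix.charpoly_fin_three_star,
    neg_one_add_mul_add_one_add_mul_of_mul_eq_one]
  rw [neg_mul, Complex.exp_neg, mul_inv_cancel₀ (Complex.exp_ne_zero _)]

/-- At flux `Φ = π` the characteristic polynomial of the rhombic-lattice Bloch
Hamiltonian is independent of `k`; in particular every eigenvalue band is flat. -/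
theorem stmt_2 :
    (∀ k k' : ℝ, (rhombicBlochPi k).charpoly = (rhombicBlochPi k').charpoly) ∧
      (∀ k k' : ℝ, spectrum ℂ (rhombicBlochPi k) = spectrum ℂ (rhombicBlochPi k')) := by
  have hcharpoly (k k' : ℝ) : (rhombicBlochPi k).charpoly = (rhombicBlochPi k').charpoly := by
    rw [rhombicBlochPi_charpoly, rhombicBlochPi_charpoly]
  exact ⟨hcharpoly, fun k k' => Matrix.spectrum_eq_of_charpoly_eq (hcharpoly k k')⟩
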